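/- arXiv:1302.3145 — 2 statements merged into one kernel-verified Lean document; each statement's English description precedes it below -/
import Mathlib

section
/- Let 0 ≤ τ ≤ 1/4, let {s} = U₁ ⊂ U₂ ⊂ … ⊂ U_k = V \ {t} be the chain of all τ-narrow s-t cuts, and set L₁ = {s}, L_i = U_i \ U_{i−1} for 1 < i ≤ k, and L_{k+1} = {t}. Then for each 1 ≤ i ≤ k we have x(∂(L_i; L_{i+1})) ≥ 1 − 3τ, where ∂(L_i; L_{i+1}) denotes the arcs from L_i to L_{i+1}. -/
open Finset

variable {V : Type*} [Fintype V] [DecidableEq V]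

/-- Total `x`-weight of arcs from `A` to `B`. -/
def flowBtw (x : V → V → ℝ) (A B : Finset V) : ℝ := ∑ u ∈ A, ∑ v ∈ B, x u v

/-- `x(∂⁺(U))`: weight of arcs leaving `U`. -/
def cutOut (x : V → V → ℝ) (U : Finset V) : ℝ := flowBtw x U Uᶜ

/-- `x(∂⁻(U))`: weight of arcs entering `U`. -/
def cutIn (x : V → V → ℝ) (U : Finset V) : ℝ := flowBtw x Uᶜ U

/-- Feasibility for the ATSPP subtour elimination LP on the complete digraph on `V`. -/
structure FeasLP (s t : V) (x : V → V → ℝ) : Prop where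
  nonneg : ∀ u v, 0 ≤ x u v
  diag : ∀ v, x v v = 0
  outS : ∑ v, x s v = 1
  inS : ∑ v, x v s = 0
  inT : ∑ v, x v t = 1
  outT : ∑ v, x t v = 0
  outDeg : ∀ v, v ≠ s → v ≠ t → ∑ w, x v w = 1
  inDeg : ∀ v, v ≠ s → v ≠ t → ∑ w, x w v = 1
  cut : ∀ U : Finset V, s ∈ U → U ≠ Finset.univ → 1 ≤ cutOut x U

/-- A `τ`-narrow `s`-`t` cut: `s ∈ U`, `t ∉ U`, and `x(∂⁺(U)) < 1 + τ`. -/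
def NarrowCut (s t : V) (x : V → V → ℝ) (τ : ℝ) (U : Finset V) : Prop :=
  s ∈ U ∧ t ∉ U ∧ cutOut x U < 1 + τ


set_option linter.unusedSectionVars false

section AuxLemmas

lemma flowBtw_nonneg (x : V → V → ℝ) (h : ∀ u v, 0 ≤ x u v) (A B : Finset V) :
    0 ≤ flowBtw x A B :=
  Finset.sum_nonneg fun u _ => Finset.sum_nonneg fun v _ => h u v

lemma flowBtw_mono (x : V → V → ℝ) (h : ∀ u v, 0 ≤ x u v) {A A' B B' : Finset V}
    (hA : A ⊆ A') (hB : B ⊆ B') : flowBtw x A B ≤ flowBtw x A' B' := by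
  unfold flowBtw
  calc ∑ u ∈ A, ∑ v ∈ B, x u v
      ≤ ∑ u ∈ A, ∑ v ∈ B', x u v :=
        Finset.sum_le_sum fun u _ =>
          Finset.sum_le_sum_of_subset_of_nonneg hB (fun v _ _ => h u v)
    _ ≤ ∑ u ∈ A', ∑ v ∈ B', x u v :=
        Finset.sum_le_sum_of_subset_of_nonneg hA
          (fun u _ _ => Finset.sum_nonneg fun v _ => h u v)

lemma flowBtw_union_left (x : V → V → ℝ) {A B : Finset V} (C : Finset V) (h : Disjoint A B) :
    flowBtw x (A ∪ B) C = flowBtw x A C + flowBtw x B C := Finset.sum_union h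

lemma flowBtw_union_right (x : V → V → ℝ) (A : Finset V) {B C : Finset V} (h : Disjoint B C) :
    flowBtw x A (B ∪ C) = flowBtw x A B + flowBtw x A C := by
  unfold flowBtw
  rw [← Finset.sum_add_distrib]
  exact Finset.sum_congr rfl fun u _ => Finset.sum_union h

lemma flowBtw_self_split (x : V → V → ℝ) (U : Finset V) :
    flowBtw x U Finset.univ = flowBtw x U U + flowBtw x U Uᶜ := by
  rw [← flowBtw_union_right x U disjoint_compl_right, Finset.union_compl]

lemma flowBtw_self_split' (x : V → V → ℝ) (U : Finset V) :
    flowBtw x Finset.univ U = flowBtw x U U + flowBtw x Uᶜ U := by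
  rw [← flowBtw_union_left x U disjoint_compl_right, Finset.union_compl]

lemma flowBtw_univ_comm (x : V → V → ℝ) (U : Finset V) :
    flowBtw x Finset.univ U = ∑ v ∈ U, ∑ w, x w v := by
  unfold flowBtw; exact Finset.sum_comm

variable {s t : V} {x : V → V → ℝ}

lemma outdeg_sum (hx : FeasLP s t x) {U : Finset V} (ht : t ∉ U) :
    flowBtw x U Finset.univ = U.card := by
  have h : ∀ v ∈ U, ∑ w, x v w = 1 := by
    intro v hv
    by_cases hvs : v = s
    · subst hvs; exact hx.outS
    · exact hx.outDeg v hvs (fun h => ht (h ▸ hv))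
  unfold flowBtw
  rw [Finset.sum_congr rfl h]
  simp

lemma indeg_sum (hx : FeasLP s t x) {U : Finset V} (hs : s ∈ U) (ht : t ∉ U) :
    flowBtw x Finset.univ U = (U.card : ℝ) - 1 := by
  have h : ∀ v ∈ U.erase s, ∑ w, x w v = 1 := by
    intro v hv
    obtain ⟨hvs, hvU⟩ := Finset.mem_erase.mp hv
    exact hx.inDeg v hvs (fun h => ht (h ▸ hvU))
  have hc : 1 ≤ U.card := Finset.card_pos.mpr ⟨s, hs⟩
  rw [flowBtw_univ_comm, ← Finset.add_sum_erase _ _ hs, hx.inS,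
    Finset.sum_congr rfl h, Finset.sum_const, Finset.card_erase_of_mem hs,
    nsmul_eq_mul, mul_one, Nat.cast_sub hc]
  push_cast
  ring

lemma netflow (hx : FeasLP s t x) {U : Finset V} (hs : s ∈ U) (ht : t ∉ U) :
    cutOut x U = cutIn x U + 1 := by
  have h1 := flowBtw_self_split x U
  have h2 := flowBtw_self_split' x U
  have h3 := outdeg_sum hx ht
  have h4 := indeg_sum hx hs ht
  unfold cutOut cutIn
  linarith

lemma flowcons (hx : FeasLP s t x) {M : Finset V} (hs : s ∉ M) (ht : t ∉ M) :
    flowBtw x M Mᶜ = flowBtw x Mᶜ M := by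
  have h1 := flowBtw_self_split x M
  have h2 := flowBtw_self_split' x M
  have h3 := outdeg_sum hx ht
  have h4 : flowBtw x Finset.univ M = (M.card : ℝ) := by
    rw [flowBtw_univ_comm, Finset.sum_congr rfl
      (fun v hv => hx.inDeg v (fun h => hs (h ▸ hv)) (fun h => ht (h ▸ hv)))]
    simp
  linarith

/-- cut on `A ∪ Bᶜ`: flow from `A` directly into `B \ A` is large. -/
lemma step_core (hx : FeasLP s t x) {A B : Finset V} (hsA : s ∈ A) (hsB : s ∈ B)
    (htB : t ∉ B) (hAB : A ⊆ B) (hne : A ≠ B) :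
    2 - cutOut x B ≤ flowBtw x A (B \ A) := by
  set W : Finset V := A ∪ Bᶜ with hW
  have hWc : Wᶜ = B \ A := by
    ext v; rw [hW]; simp only [Finset.mem_compl, Finset.mem_union, Finset.mem_sdiff]; tauto
  have hMne : (B \ A).Nonempty := by
    rw [Finset.sdiff_nonempty]; intro h; exact hne (subset_antisymm hAB h)
  have hWuniv : W ≠ Finset.univ := by
    intro h
    have : Wᶜ = ∅ := by rw [h, Finset.compl_univ]
    rw [hWc] at this
    exact hMne.ne_empty this
  have hdisj : Disjoint A Bᶜ := disjoint_compl_right.mono_left hAB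
  have hcut : 1 ≤ cutOut x W := hx.cut W (Finset.mem_union_left _ hsA) hWuniv
  have hsplit : cutOut x W = flowBtw x A (B \ A) + flowBtw x Bᶜ (B \ A) := by
    rw [cutOut, hWc, hW, flowBtw_union_left x _ hdisj]
  have hsmall : flowBtw x Bᶜ (B \ A) ≤ cutIn x B :=
    flowBtw_mono x hx.nonneg (le_refl _) Finset.sdiff_subset
  have hnet := netflow hx hsB htB
  linarith

/-- cut on `(B \ A)ᶜ` plus flow conservation: flow from `B \ A` out of `B` is large. -/
lemma step_core2 (hx : FeasLP s t x) {A B : Finset V} (hsA : s ∈ A)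
    (htB : t ∉ B) (hAB : A ⊆ B) (hne : A ≠ B) :
    2 - cutOut x A ≤ flowBtw x (B \ A) Bᶜ := by
  set M : Finset V := B \ A with hM
  have htA : t ∉ A := fun h => htB (hAB h)
  have hsM : s ∉ M := by rw [hM]; simp [Finset.mem_sdiff, hsA]
  have htM : t ∉ M := by rw [hM]; simp [Finset.mem_sdiff, htB]
  have hMc : Mᶜ = A ∪ Bᶜ := by
    ext v; rw [hM]; simp only [Finset.mem_compl, Finset.mem_union, Finset.mem_sdiff]; tauto
  have hMne : M.Nonempty := by
    rw [hM, Finset.sdiff_nonempty]; intro h; exact hne (subset_antisymm hAB h)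
  have hMcuniv : Mᶜ ≠ Finset.univ := by
    intro h
    have : M = ∅ := by simpa using congrArg compl h
    exact hMne.ne_empty this
  have hcut : 1 ≤ cutOut x Mᶜ := by
    refine hx.cut _ ?_ hMcuniv
    rw [hMc]; exact Finset.mem_union_left _ hsA
  have hc : cutOut x Mᶜ = flowBtw x Mᶜ M := by rw [cutOut, compl_compl]
  have hfc := flowcons hx hsM htM
  have hdisj : Disjoint A Bᶜ := disjoint_compl_right.mono_left hAB
  have hsplit : flowBtw x M Mᶜ = flowBtw x M A + flowBtw x M Bᶜ := by
    rw [hMc, flowBtw_union_right x _ hdisj]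
  have hMsubAc : M ⊆ Aᶜ := by
    intro v hv; rw [Finset.mem_compl]; exact (Finset.mem_sdiff.mp hv).2
  have hsmall : flowBtw x M A ≤ cutIn x A :=
    flowBtw_mono x hx.nonneg hMsubAc (le_refl _)
  have hnet := netflow hx hsA htA
  linarith

end AuxLemmas

theorem stmt3 (s t : V) (hst : s ≠ t) (x : V → V → ℝ) (hx : FeasLP s t x)
    (τ : ℝ) (hτ0 : 0 ≤ τ) (hτ : τ ≤ 1/4)
    (k : ℕ) (hk : 2 ≤ k) (Uc L : ℕ → Finset V)
    (hU1 : Uc 1 = {s}) (hUk : Uc k = Finset.univ \ {t})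
    (hmono : ∀ i j, 1 ≤ i → i < j → j ≤ k → Uc i ⊂ Uc j)
    (hnarrow : ∀ i, 1 ≤ i → i ≤ k → NarrowCut s t x τ (Uc i))
    (hall : ∀ W : Finset V, NarrowCut s t x τ W → ∃ i, 1 ≤ i ∧ i ≤ k ∧ W = Uc i)
    (hL1 : L 1 = {s}) (hLtop : L (k+1) = {t})
    (hL : ∀ i, 1 < i → i ≤ k → L i = Uc i \ Uc (i-1)) :
    ∀ i, 1 ≤ i → i ≤ k → 1 - 3*τ ≤ flowBtw x (L i) (L (i+1)) := by
  intro i hi1 hik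
  have hnn := hx.nonneg
  have hIn : ∀ j, 1 ≤ j → j ≤ k → cutOut x (Uc j) < 1 + τ ∧ cutIn x (Uc j) < τ := by
    intro j h1 h2
    obtain ⟨hs', ht', hc⟩ := hnarrow j h1 h2
    have := netflow hx hs' ht'
    exact ⟨hc, by linarith⟩
  obtain ⟨hsI, htI, hcI⟩ := hnarrow i hi1 hik
  -- Step A : flow from `Uc i` into the next layer is at least `1 - τ`
  have stepA : 1 - τ ≤ flowBtw x (Uc i) (L (i+1)) := by
    rcases lt_or_eq_of_le hik with hlt | heq
    · have h1 : 1 ≤ i + 1 := by omega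
      have h2 : i + 1 ≤ k := by omega
      obtain ⟨hsU, htU, _⟩ := hnarrow (i+1) h1 h2
      have hsub : Uc i ⊂ Uc (i+1) := hmono i (i+1) hi1 (Nat.lt_succ_self i) h2
      have hLe := hL (i+1) (by omega) h2
      rw [Nat.add_sub_cancel] at hLe
      have hcore := step_core hx hsI hsU htU hsub.subset hsub.ne
      have hcu := (hIn (i+1) h1 h2).1
      have hci := netflow hx hsU htU
      rw [hLe]
      linarith
    · subst heq
      have hcompl : (Uc i)ᶜ = {t} := by
        rw [hUk]; ext v
        simp only [Finset.mem_compl, Finset.mem_sdiff, Finset.mem_univ, true_and,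
          Finset.mem_singleton]
        tauto
      have hne : Uc i ≠ Finset.univ := fun h => htI (h ▸ Finset.mem_univ t)
      have hcut := hx.cut (Uc i) hsI hne
      have hco : cutOut x (Uc i) = flowBtw x (Uc i) (Uc i)ᶜ := rfl
      rw [hLtop, ← hcompl]
      linarith
  by_cases hi2 : 2 ≤ i
  · obtain ⟨hsP, htP, _⟩ := hnarrow (i-1) (by omega) (by omega)
    have hsubP : Uc (i-1) ⊂ Uc i := hmono (i-1) i (by omega) (by omega) hik
    have hcore2 := step_core2 hx hsP htI hsubP.subset hsubP.ne
    have hB : flowBtw x (Uc (i-1)) ((Uc i)ᶜ) ≤ 2*τ := by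
      have hsplit : cutOut x (Uc i) =
          flowBtw x (Uc (i-1)) (Uc i)ᶜ + flowBtw x (Uc i \ Uc (i-1)) (Uc i)ᶜ := by
        rw [cutOut, ← flowBtw_union_left x _ Finset.disjoint_sdiff,
          Finset.union_sdiff_of_subset hsubP.subset]
      have hcP := (hIn (i-1) (by omega) (by omega)).1
      linarith
    have hLsub : L (i+1) ⊆ (Uc i)ᶜ := by
      intro v hv
      rw [Finset.mem_compl]
      rcases lt_or_eq_of_le hik with hlt | heq
      · have hLe := hL (i+1) (by omega) (by omega)
        rw [Nat.add_sub_cancel] at hLe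
        rw [hLe] at hv
        exact (Finset.mem_sdiff.mp hv).2
      · subst heq
        rw [hLtop, Finset.mem_singleton] at hv
        subst hv
        exact htI
    have hLi : L i = Uc i \ Uc (i-1) := hL i (by omega) hik
    have hsplit2 : flowBtw x (Uc i) (L (i+1)) =
        flowBtw x (Uc (i-1)) (L (i+1)) + flowBtw x (L i) (L (i+1)) := by
      rw [hLi, ← flowBtw_union_left x _ Finset.disjoint_sdiff,
        Finset.union_sdiff_of_subset hsubP.subset]
    have hmonof : flowBtw x (Uc (i-1)) (L (i+1)) ≤ flowBtw x (Uc (i-1)) ((Uc i)ᶜ) :=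
      flowBtw_mono x hnn (le_refl _) hLsub
    linarith
  · have : i = 1 := by omega
    subst this
    rw [hL1, ← hU1]
    linarith
end

section
/- In the gap instance graph G_r, assigning x_a = 1/2 to every arc of G_r (and 0 to all other arcs of the metric completion) yields a feasible solution of the ATSPP subtour elimination LP of total cost r + 1. -/
open Finset

variable {V : Type*} [Fintype V] [DecidableEq V]

/-- Vertices of the gap instance `G_r`: `s`, `t`, `u₀,…,u_{r-1}`, `v₀,…,v_{r-1}`
(`u i` stands for `u_{i+1}` in 1-based paper notation). -/
inductive GapV (r : ℕ) where
  | s | t | u (i : Fin r) | v (i : Fin r)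
  deriving DecidableEq, Fintype

/-- The arcs of `G_r`. -/
def isArc {r : ℕ} : GapV r → GapV r → Bool
  | .s, .u i => i.val = 0
  | .s, .v i => i.val = 0
  | .u i, .t => i.val = r - 1
  | .v i, .t => i.val = r - 1
  | .u i, .v j => i.val = 0 && j.val = r - 1
  | .v i, .u j => i.val = 0 && j.val = r - 1
  | .u i, .u j => j.val + 1 = i.val || i.val + 1 = j.val
  | .v i, .v j => j.val + 1 = i.val || i.val + 1 = j.val
  | _, _ => false

/-- Arc costs in `G_r`: the arcs `s u₁`, `s v₁`, `u_r t`, `v_r t`, `u_{i+1} u_i`,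
`v_{i+1} v_i` cost 1; all other arcs cost 0. -/
noncomputable def gapCost {r : ℕ} : GapV r → GapV r → ℝ
  | .s, .u _ => 1
  | .s, .v _ => 1
  | .u _, .t => 1
  | .v _, .t => 1
  | .u i, .u j => if j.val + 1 = i.val then 1 else 0
  | .v i, .v j => if j.val + 1 = i.val then 1 else 0
  | _, _ => 0

/-- The half-integral LP solution: `1/2` on every arc of `G_r`, `0` elsewhere. -/
noncomputable def gapX (r : ℕ) : GapV r → GapV r → ℝ := fun a b => if isArc a b then 1/2 else 0

/-!
On the vertices other than `s` and `t`, the arcs of `G_r` split into the two `s`–`t` paths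
`s → u₁ → ⋯ → u_r → t` and `s → v₁ → ⋯ → v_r → t` and the Hamiltonian cycle
`u_r → ⋯ → u₁ → v_r → ⋯ → v₁ → u_r`, so `x` is half the sum of their incidence vectors. Hence every
such vertex has exactly two out-arcs (its successors on the path and on the cycle) and two in-arcs,
which gives the degree constraints, and the cost is `(2 + 2 + 2(r - 1)) / 2 = r + 1`.
For a cut `U ∋ s`: if `t ∉ U`, flow conservation gives `x(∂⁺(U)) ≥ 1`. Otherwise some `u_k` (say)
lies outside `U`; walking back along its path from `s` gives one arc leaving `U`, and a second one
comes either from the `v`-path, if some `v_k'` lies outside `U`, or else from walking back along the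
cycle from `v₁ ∈ U`.
-/

section Cuts

theorem sum_ite_eq_add_of_iff {M : Type*} [AddCommMonoid M] {p : V → Prop} [DecidablePred p]
    {b₁ b₂ : V} (h : ∀ b, p b ↔ b = b₁ ∨ b = b₂) (hne : b₁ ≠ b₂) (f : V → M) :
    ∑ b, (if p b then f b else 0) = f b₁ + f b₂ := by
  rw [← sum_filter, show univ.filter p = {b₁, b₂} by ext; simp [h], sum_pair hne]

theorem cutIn_nonneg {x : V → V → ℝ} (hx : ∀ a b, 0 ≤ x a b) (U : Finset V) :
    0 ≤ cutIn x U :=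
  sum_nonneg fun _ _ => sum_nonneg fun _ _ => hx _ _

theorem cutOut_sub_cutIn (x : V → V → ℝ) (U : Finset V) :
    cutOut x U - cutIn x U = ∑ v ∈ U, (∑ w, x v w - ∑ w, x w v) := by
  have hout : ∑ v ∈ U, ∑ w, x v w = flowBtw x U U + cutOut x U := by
    simp only [cutOut, flowBtw, ← sum_add_distrib, sum_add_sum_compl]
  have hin : ∑ v ∈ U, ∑ w, x w v = flowBtw x U U + cutIn x U := by
    simp only [cutIn, flowBtw]
    rw [sum_comm (s := Uᶜ), sum_comm (s := U) (t := U), ← sum_add_distrib]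
    simp only [sum_add_sum_compl]
  rw [sum_sub_distrib, hout, hin]
  ring

theorem one_le_cutOut_of_mem_of_notMem {x : V → V → ℝ} {s t : V} (hx : ∀ a b, 0 ≤ x a b)
    (hs : ∑ w, x s w - ∑ w, x w s = 1)
    (hconserve : ∀ v, v ≠ s → v ≠ t → ∑ w, x v w = ∑ w, x w v)
    {U : Finset V} (hsU : s ∈ U) (htU : t ∉ U) : 1 ≤ cutOut x U := by
  have hnet : ∑ v ∈ U, (∑ w, x v w - ∑ w, x w v) = 1 := by
    rw [sum_eq_single_of_mem s hsU fun v hv hvs => by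
      rw [hconserve v hvs (ne_of_mem_of_not_mem hv htU), sub_self], hs]
  linarith [cutOut_sub_cutIn x U, cutIn_nonneg hx U]

theorem add_le_cutOut {x : V → V → ℝ} (hx : ∀ a b, 0 ≤ x a b) {U : Finset V}
    {a₁ b₁ a₂ b₂ : V} (ha₁ : a₁ ∈ U) (hb₁ : b₁ ∉ U) (ha₂ : a₂ ∈ U) (hb₂ : b₂ ∉ U)
    (hne : (a₁, b₁) ≠ (a₂, b₂)) : x a₁ b₁ + x a₂ b₂ ≤ cutOut x U := by
  have hsub : {(a₁, b₁), (a₂, b₂)} ⊆ U ×ˢ Uᶜ := by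
    simp [insert_subset_iff, ha₁, hb₁, ha₂, hb₂]
  calc x a₁ b₁ + x a₂ b₂ = ∑ p ∈ {(a₁, b₁), (a₂, b₂)}, x p.1 p.2 := by rw [sum_pair hne]
    _ ≤ ∑ p ∈ U ×ˢ Uᶜ, x p.1 p.2 := sum_le_sum_of_subset_of_nonneg hsub fun p _ _ => hx p.1 p.2
    _ = cutOut x U := sum_product U Uᶜ fun p : V × V => x p.1 p.2

end Cuts

namespace GapV

variable {n : ℕ}

def node : Bool → Fin (n + 1) → GapV (n + 1)
  | true, i => .u i
  | false, i => .v i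

def pathPred (c : Bool) : Fin (n + 1) → GapV (n + 1) :=
  Fin.cases .s fun j => node c j.castSucc

def pathSucc (c : Bool) : Fin (n + 1) → GapV (n + 1) :=
  Fin.lastCases .t fun j => node c j.succ

def cycPred (c : Bool) : Fin (n + 1) → GapV (n + 1) :=
  Fin.lastCases (node (!c) 0) fun j => node c j.succ

def cycSucc (c : Bool) : Fin (n + 1) → GapV (n + 1) :=
  Fin.cases (node (!c) (Fin.last n)) fun j => node c j.castSucc

theorem sum_univ {M : Type*} [AddCommMonoid M] (f : GapV (n + 1) → M) :
    ∑ a, f a = f .s + (f .t + ∑ c, ∑ i, f (node c i)) := by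
  let e : Option (Option (Bool × Fin (n + 1))) ≃ GapV (n + 1) :=
    { toFun := fun | none => .s | some none => .t | some (some (c, i)) => node c i
      invFun := fun | .s => none | .t => some none | .u i => some (some (true, i))
                    | .v i => some (some (false, i))
      left_inv := by rintro (_ | _ | ⟨_ | _, i⟩) <;> rfl
      right_inv := by rintro (_ | _ | _ | _) <;> rfl }
  rw [← e.sum_comp, Fintype.sum_option, Fintype.sum_option, Fintype.sum_prod_type]
  rfl

theorem node_inj {c c' : Bool} {i j : Fin (n + 1)} : node c i = node c' j ↔ c = c' ∧ i = j := by
  cases c <;> cases c' <;> simp [node]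

theorem eq_node_of_ne {a : GapV (n + 1)} (hs : a ≠ .s) (ht : a ≠ .t) : ∃ c i, a = node c i := by
  cases a with
  | s => exact absurd rfl hs
  | t => exact absurd rfl ht
  | u i => exact ⟨true, i, rfl⟩
  | v i => exact ⟨false, i, rfl⟩

theorem pathPred_eq_dite (c : Bool) (i : Fin (n + 1)) :
    pathPred c i = if i.val = 0 then .s else node c ⟨i - 1, by omega⟩ := by
  induction i using Fin.cases <;> simp [pathPred]; rfl

theorem pathSucc_eq_dite (c : Bool) (i : Fin (n + 1)) :
    pathSucc c i = if h : i.val < n then node c ⟨i + 1, by omega⟩ else .t := by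
  induction i using Fin.lastCases <;> simp [pathSucc]; rfl

theorem cycPred_eq_dite (c : Bool) (i : Fin (n + 1)) :
    cycPred c i = if h : i.val < n then node c ⟨i + 1, by omega⟩ else node (!c) 0 := by
  induction i using Fin.lastCases <;> simp [cycPred]; rfl

theorem cycSucc_eq_dite (c : Bool) (i : Fin (n + 1)) :
    cycSucc c i = if i.val = 0 then node (!c) (Fin.last n) else node c ⟨i - 1, by omega⟩ := by
  induction i using Fin.cases <;> simp [cycSucc]; rfl

theorem isArc_from_s_iff (b : GapV (n + 1)) :
    isArc .s b ↔ b = node true 0 ∨ b = node false 0 := by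
  cases b <;> simp only [isArc, node, Fin.ext_iff, u.injEq, v.injEq, reduceCtorEq, Fin.val_zero,
    decide_eq_true_eq, false_or, or_false, Bool.false_eq_true]

theorem isArc_to_t_iff (a : GapV (n + 1)) :
    isArc a .t ↔ a = node true (Fin.last n) ∨ a = node false (Fin.last n) := by
  cases a <;> simp only [isArc, node, Fin.ext_iff, u.injEq, v.injEq, reduceCtorEq, Fin.val_last,
    decide_eq_true_eq, false_or, or_false, Bool.false_eq_true] <;> omega

theorem isArc_to_s (a : GapV (n + 1)) : isArc a .s = false := by
  cases a <;> rfl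

theorem isArc_from_t (b : GapV (n + 1)) : isArc .t b = false := by
  cases b <;> rfl

theorem isArc_from_node_iff (c : Bool) (i : Fin (n + 1)) (b : GapV (n + 1)) :
    isArc (node c i) b ↔ b = pathSucc c i ∨ b = cycSucc c i := by
  rw [pathSucc_eq_dite, cycSucc_eq_dite]
  cases c <;> cases b <;> split_ifs <;> simp only [node, isArc, Bool.not_true, Bool.not_false]
  all_goals simp only [Fin.ext_iff, u.injEq, v.injEq, reduceCtorEq, Fin.val_last, Bool.or_eq_true,
    Bool.and_eq_true, decide_eq_true_eq, false_or, or_false, iff_true, iff_false]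
  all_goals omega

theorem isArc_to_node_iff (c : Bool) (i : Fin (n + 1)) (a : GapV (n + 1)) :
    isArc a (node c i) ↔ a = pathPred c i ∨ a = cycPred c i := by
  rw [pathPred_eq_dite, cycPred_eq_dite]
  cases c <;> cases a <;> split_ifs <;> simp only [node, isArc, Bool.not_true, Bool.not_false]
  all_goals simp only [Fin.ext_iff, u.injEq, v.injEq, reduceCtorEq, Fin.val_zero, Bool.or_eq_true,
    Bool.and_eq_true, decide_eq_true_eq, false_or, or_false, iff_true, iff_false]
  all_goals omega

theorem pathSucc_ne_cycSucc (c : Bool) (i : Fin (n + 1)) : pathSucc c i ≠ cycSucc c i := by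
  rw [pathSucc_eq_dite, cycSucc_eq_dite]
  cases c <;> split_ifs <;> simp [node, Fin.ext_iff] <;> omega

theorem pathPred_ne_cycPred (c : Bool) (i : Fin (n + 1)) : pathPred c i ≠ cycPred c i := by
  rw [pathPred_eq_dite, cycPred_eq_dite]
  cases c <;> split_ifs <;> simp [node, Fin.ext_iff]

theorem sum_gapCost_pathSucc (c : Bool) :
    ∑ i : Fin (n + 1), gapCost (node c i) (pathSucc c i) = 1 := by
  cases c <;> simp [Fin.sum_univ_castSucc, pathSucc, node, gapCost] <;> omega

theorem sum_gapCost_cycSucc (c : Bool) :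
    ∑ i : Fin (n + 1), gapCost (node c i) (cycSucc c i) = n := by
  cases c <;> simp [Fin.sum_univ_succ, cycSucc, node, gapCost]

theorem exists_pathPred_mem_of_notMem {U : Finset (GapV (n + 1))} (hs : .s ∈ U) (c : Bool)
    (k : Fin (n + 1)) (hk : node c k ∉ U) : ∃ j, pathPred c j ∈ U ∧ node c j ∉ U := by
  induction k using Fin.induction with
  | zero => exact ⟨0, hs, hk⟩
  | succ j ih =>
    by_cases hj : node c j.castSucc ∈ U
    · exact ⟨j.succ, hj, hk⟩
    · exact ih hj

theorem exists_cycPred_mem_of_notMem {U : Finset (GapV (n + 1))} (c : Bool)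
    (h0 : node (!c) 0 ∈ U) (k : Fin (n + 1)) (hk : node c k ∉ U) :
    ∃ j, cycPred c j ∈ U ∧ node c j ∉ U := by
  induction k using Fin.reverseInduction with
  | last => exact ⟨Fin.last n, by simpa [cycPred] using h0, hk⟩
  | cast j ih =>
    by_cases hj : node c j.succ ∈ U
    · exact ⟨j.castSucc, by simpa [cycPred] using hj, hk⟩
    · exact ih hj

theorem exists_two_crossing_arcs {U : Finset (GapV (n + 1))} (hs : .s ∈ U) {c : Bool}
    {k : Fin (n + 1)} (hk : node c k ∉ U) :
    ∃ a₁ b₁ a₂ b₂, a₁ ∈ U ∧ b₁ ∉ U ∧ isArc a₁ b₁ ∧ a₂ ∈ U ∧ b₂ ∉ U ∧ isArc a₂ b₂ ∧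
      (a₁, b₁) ≠ (a₂, b₂) := by
  obtain ⟨j, hjU, hj⟩ := exists_pathPred_mem_of_notMem hs c k hk
  suffices ∃ a b, a ∈ U ∧ b ∉ U ∧ isArc a b ∧ (pathPred c j, node c j) ≠ (a, b) by
    obtain ⟨a, b, haU, hbU, hab, hne⟩ := this
    exact ⟨_, _, a, b, hjU, hj, (isArc_to_node_iff c j _).2 (.inl rfl), haU, hbU, hab, hne⟩
  by_cases hother : ∃ k', node (!c) k' ∉ U
  · obtain ⟨k', hk'⟩ := hother
    obtain ⟨j', hj'U, hj'⟩ := exists_pathPred_mem_of_notMem hs (!c) k' hk'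
    refine ⟨_, _, hj'U, hj', (isArc_to_node_iff (!c) j' _).2 (.inl rfl), ?_⟩
    simp [node_inj]
  · push Not at hother
    obtain ⟨j', hj'U, hj'⟩ := exists_cycPred_mem_of_notMem c (hother 0) k hk
    refine ⟨_, _, hj'U, hj', (isArc_to_node_iff c j' _).2 (.inr rfl), ?_⟩
    simp only [ne_eq, Prod.mk.injEq, node_inj, true_and, not_and]
    rintro h rfl
    exact pathPred_ne_cycPred c j h

end GapV

section GapX

open GapV

variable {n : ℕ}

theorem gapX_nonneg (r : ℕ) (a b : GapV r) : 0 ≤ gapX r a b := by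
  unfold gapX; split_ifs <;> norm_num

theorem gapX_self (r : ℕ) (a : GapV r) : gapX r a a = 0 := by
  cases a <;> simp [gapX, isArc]

theorem gapX_of_isArc {r : ℕ} {a b : GapV r} (h : isArc a b) : gapX r a b = 1 / 2 := by
  simp [gapX, h]

theorem sum_gapX_from_eq_one {r : ℕ} {a b₁ b₂ : GapV r} (h : ∀ b, isArc a b ↔ b = b₁ ∨ b = b₂)
    (hne : b₁ ≠ b₂) : ∑ b, gapX r a b = 1 := by
  simp only [gapX]
  rw [sum_ite_eq_add_of_iff h hne]
  norm_num

theorem sum_gapX_to_eq_one {r : ℕ} {b a₁ a₂ : GapV r} (h : ∀ a, isArc a b ↔ a = a₁ ∨ a = a₂)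
    (hne : a₁ ≠ a₂) : ∑ a, gapX r a b = 1 := by
  simp only [gapX]
  rw [sum_ite_eq_add_of_iff h hne]
  norm_num

theorem sum_gapCost_mul_gapX_of_iff {r : ℕ} {a b₁ b₂ : GapV r}
    (h : ∀ b, isArc a b ↔ b = b₁ ∨ b = b₂) (hne : b₁ ≠ b₂) :
    ∑ b, gapCost a b * gapX r a b = (gapCost a b₁ + gapCost a b₂) / 2 := by
  simp only [gapX, mul_ite, mul_zero]
  rw [sum_ite_eq_add_of_iff h hne]
  ring

theorem sum_gapX_from_s : ∑ b, gapX (n + 1) .s b = 1 :=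
  sum_gapX_from_eq_one isArc_from_s_iff (by simp [node_inj])

theorem sum_gapX_to_s : ∑ a, gapX (n + 1) a .s = 0 := by
  simp [gapX, isArc_to_s]

theorem sum_gapX_from_t : ∑ b, gapX (n + 1) .t b = 0 := by
  simp [gapX, isArc_from_t]

theorem sum_gapX_to_t : ∑ a, gapX (n + 1) a .t = 1 :=
  sum_gapX_to_eq_one isArc_to_t_iff (by simp [node_inj])

theorem sum_gapX_from_internal {a : GapV (n + 1)} (hs : a ≠ .s) (ht : a ≠ .t) :
    ∑ b, gapX (n + 1) a b = 1 := by
  obtain ⟨c, i, rfl⟩ := eq_node_of_ne hs ht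
  exact sum_gapX_from_eq_one (isArc_from_node_iff c i) (pathSucc_ne_cycSucc c i)

theorem sum_gapX_to_internal {b : GapV (n + 1)} (hs : b ≠ .s) (ht : b ≠ .t) :
    ∑ a, gapX (n + 1) a b = 1 := by
  obtain ⟨c, i, rfl⟩ := eq_node_of_ne hs ht
  exact sum_gapX_to_eq_one (isArc_to_node_iff c i) (pathPred_ne_cycPred c i)

theorem sum_gapCost_mul_gapX : ∑ a, ∑ b, gapCost a b * gapX (n + 1) a b = n + 2 := by
  have hs : ∑ b, gapCost .s b * gapX (n + 1) .s b = 1 := by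
    rw [sum_gapCost_mul_gapX_of_iff isArc_from_s_iff (by simp [node_inj])]
    simp [node, gapCost]
  have ht : ∑ b, gapCost .t b * gapX (n + 1) .t b = 0 := by
    simp [gapX, isArc_from_t]
  have hnode (c : Bool) (i : Fin (n + 1)) : ∑ b, gapCost (node c i) b * gapX (n + 1) (node c i) b =
      (gapCost (node c i) (pathSucc c i) + gapCost (node c i) (cycSucc c i)) / 2 :=
    sum_gapCost_mul_gapX_of_iff (isArc_from_node_iff c i) (pathSucc_ne_cycSucc c i)
  rw [sum_univ, hs, ht]
  simp only [hnode, ← sum_div, sum_add_distrib, sum_gapCost_pathSucc,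
    sum_gapCost_cycSucc, Fintype.sum_bool]
  ring

theorem one_le_cutOut_gapX {U : Finset (GapV (n + 1))} (hsU : .s ∈ U) (hU : U ≠ univ) :
    1 ≤ cutOut (gapX (n + 1)) U := by
  by_cases htU : GapV.t ∈ U
  · obtain ⟨w, hw⟩ : ∃ w, w ∉ U := by simpa [eq_univ_iff_forall] using hU
    obtain ⟨c, k, rfl⟩ := eq_node_of_ne (ne_of_mem_of_not_mem hsU hw).symm
      (ne_of_mem_of_not_mem htU hw).symm
    obtain ⟨a₁, b₁, a₂, b₂, ha₁, hb₁, h₁, ha₂, hb₂, h₂, hne⟩ := exists_two_crossing_arcs hsU hw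
    have := add_le_cutOut (gapX_nonneg _) ha₁ hb₁ ha₂ hb₂ hne
    rw [gapX_of_isArc h₁, gapX_of_isArc h₂] at this
    linarith
  · refine one_le_cutOut_of_mem_of_notMem (gapX_nonneg _) (by simp [sum_gapX_from_s, sum_gapX_to_s])
      (fun v hs ht => by rw [sum_gapX_from_internal hs ht, sum_gapX_to_internal hs ht]) hsU htU

end GapX

theorem stmt10 (r : ℕ) (hr : 1 ≤ r) :
    FeasLP (GapV.s : GapV r) GapV.t (gapX r) ∧
    ∑ a : GapV r, ∑ b : GapV r, gapCost a b * gapX r a b = (r : ℝ) + 1 := by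
  obtain ⟨n, rfl⟩ := Nat.exists_eq_add_of_le' hr
  refine ⟨⟨gapX_nonneg _, gapX_self _, sum_gapX_from_s, sum_gapX_to_s, sum_gapX_to_t,
    sum_gapX_from_t, fun _ => sum_gapX_from_internal, fun _ => sum_gapX_to_internal,
    fun _ => one_le_cutOut_gapX⟩, ?_⟩
  rw [sum_gapCost_mul_gapX]
  push_cast
  ring
end
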